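/- arXiv:2204.08170 — 3 statements merged into one kernel-verified Lean document; each statement's English description precedes it below -/
import Mathlib

section
/- For real parameters a(s) = -4s(s-1)^2, b(s) = -s(5s^2-10s+4), c(s) = 4(s-1)(2s-1), and the polynomials x1 = -(a-b+2s^3)(a+b+cs+s^3), x2 = 2bc(1-s) - (a-b)s^3 - b^2, x3 = b(a-b+s^3) + s^3(a+s^3-2c(1-s)), y1 = -(a-b+2s^3)(a-2c(s-1)), y2 = s^3(2b-a-cs) + c^2 s(s-2), y3 = acs - b^2 - bs^3 - s^6, z1 = -(a+s^3)(a+s^3+cs) - s^3(a-b+2s^3), z2 = s^3(a-b+s^3), z3 = s^6, the determinant of the 4x4 matrix with rows (0, c(s-2), b-a, c), (x1, x2, x3, -c(b-s^3)), (y1, y2, y3, -c(b-s^3)), (z1, z2, z3, 0) equals 64 s^8 (s-2)^3 (s-1)^3 (2s-1)^3 (3s-2)^2 (5s-4). -/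
noncomputable section

def a (s : ℝ) : ℝ := -4*s*(s-1)^2
def b (s : ℝ) : ℝ := -s*(5*s^2-10*s+4)
def c (s : ℝ) : ℝ := 4*(s-1)*(2*s-1)
def x1 (s : ℝ) : ℝ := -(a s - b s + 2*s^3)*(a s + b s + c s * s + s^3)
def x2 (s : ℝ) : ℝ := 2*(b s)*(c s)*(1-s) - (a s - b s)*s^3 - (b s)^2
def x3 (s : ℝ) : ℝ := b s * (a s - b s + s^3) + s^3*(a s + s^3 - 2*(c s)*(1-s))
def y1 (s : ℝ) : ℝ := -(a s - b s + 2*s^3)*(a s - 2*(c s)*(s-1))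
def y2 (s : ℝ) : ℝ := s^3*(2*(b s) - a s - (c s)*s) + (c s)^2*s*(s-2)
def y3 (s : ℝ) : ℝ := a s * c s * s - (b s)^2 - (b s)*s^3 - s^6
def z1 (s : ℝ) : ℝ := -(a s + s^3)*(a s + s^3 + (c s)*s) - s^3*(a s - b s + 2*s^3)
def z2 (s : ℝ) : ℝ := s^3*(a s - b s + s^3)
def z3 (s : ℝ) : ℝ := s^6

def M (s : ℝ) : Matrix (Fin 4) (Fin 4) ℝ :=
  !![0, (c s)*(s-2), b s - a s, c s;
     x1 s, x2 s, x3 s, -(c s)*(b s - s^3);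
     y1 s, y2 s, y3 s, -(c s)*(b s - s^3);
     z1 s, z2 s, z3 s, 0]

theorem Matrix.det_fin_four {R : Type*} [CommRing R] (A : Matrix (Fin 4) (Fin 4) R) :
    A.det =
      A 0 0 * (A 1 1 * (A 2 2 * A 3 3 - A 2 3 * A 3 2) - A 1 2 * (A 2 1 * A 3 3 - A 2 3 * A 3 1)
          + A 1 3 * (A 2 1 * A 3 2 - A 2 2 * A 3 1))
      - A 0 1 * (A 1 0 * (A 2 2 * A 3 3 - A 2 3 * A 3 2) - A 1 2 * (A 2 0 * A 3 3 - A 2 3 * A 3 0)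
          + A 1 3 * (A 2 0 * A 3 2 - A 2 2 * A 3 0))
      + A 0 2 * (A 1 0 * (A 2 1 * A 3 3 - A 2 3 * A 3 1) - A 1 1 * (A 2 0 * A 3 3 - A 2 3 * A 3 0)
          + A 1 3 * (A 2 0 * A 3 1 - A 2 1 * A 3 0))
      - A 0 3 * (A 1 0 * (A 2 1 * A 3 2 - A 2 2 * A 3 1) - A 1 1 * (A 2 0 * A 3 2 - A 2 2 * A 3 0)
          + A 1 2 * (A 2 0 * A 3 1 - A 2 1 * A 3 0)) := by
  simp [det_succ_row_zero, Fin.sum_univ_succ, Fin.succAbove]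
  ring

theorem Matrix.det_fin_four_of {R : Type*} [CommRing R]
    (a₀₀ a₀₁ a₀₂ a₀₃ a₁₀ a₁₁ a₁₂ a₁₃ a₂₀ a₂₁ a₂₂ a₂₃ a₃₀ a₃₁ a₃₂ a₃₃ : R) :
    Matrix.det !![a₀₀, a₀₁, a₀₂, a₀₃; a₁₀, a₁₁, a₁₂, a₁₃; a₂₀, a₂₁, a₂₂, a₂₃; a₃₀, a₃₁, a₃₂, a₃₃] =
      a₀₀ * (a₁₁ * (a₂₂ * a₃₃ - a₂₃ * a₃₂) - a₁₂ * (a₂₁ * a₃₃ - a₂₃ * a₃₁)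
          + a₁₃ * (a₂₁ * a₃₂ - a₂₂ * a₃₁))
      - a₀₁ * (a₁₀ * (a₂₂ * a₃₃ - a₂₃ * a₃₂) - a₁₂ * (a₂₀ * a₃₃ - a₂₃ * a₃₀)
          + a₁₃ * (a₂₀ * a₃₂ - a₂₂ * a₃₀))
      + a₀₂ * (a₁₀ * (a₂₁ * a₃₃ - a₂₃ * a₃₁) - a₁₁ * (a₂₀ * a₃₃ - a₂₃ * a₃₀)
          + a₁₃ * (a₂₀ * a₃₁ - a₂₁ * a₃₀))
      - a₀₃ * (a₁₀ * (a₂₁ * a₃₂ - a₂₂ * a₃₁) - a₁₁ * (a₂₀ * a₃₂ - a₂₂ * a₃₀)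
          + a₁₂ * (a₂₀ * a₃₁ - a₂₁ * a₃₀)) :=
  det_fin_four _

theorem stmt_0 (s : ℝ) :
    (M s).det = 64 * s^8 * (s-2)^3 * (s-1)^3 * (2*s-1)^3 * (3*s-2)^2 * (5*s-4) := by
  rw [M, Matrix.det_fin_four_of]
  simp only [a, b, c, x1, x2, x3, y1, y2, y3, z1, z2, z3]
  ring

end
end

section
/- For every real number s not in {0, 1/2, 2/3, 4/5, 1, 2}, the 4x4 real matrix with rows (0, c(s-2), b-a, c), (x1, x2, x3, -c(b-s^3)), (y1, y2, y3, -c(b-s^3)), (z1, z2, z3, 0) — with a, b, c, x_i, y_i, z_i as defined from s — is invertible; consequently, if a vector (A, B, C, D) in C^4 is in its kernel then A = B = C = D = 0. -/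
noncomputable section

theorem det_M (s : ℝ) :
    (M s).det = 64 * s^8 * (2*s - 1)^3 * (3*s - 2)^2 * (5*s - 4) * (s - 1)^3 * (s - 2)^3 := by
  rw [Matrix.det_fin_four]
  simp only [M, Matrix.of_apply, Matrix.cons_val, a, b, c, x1, x2, x3, y1, y2, y3, z1, z2, z3]
  ring

theorem det_M_ne_zero {s : ℝ} (hs : s ∉ ({0, 1/2, 2/3, 4/5, 1, 2} : Set ℝ)) :
    (M s).det ≠ 0 := by
  simp only [Set.mem_insert_iff, Set.mem_singleton_iff, not_or] at hs
  obtain ⟨h0, h12, h23, h45, h1, h2⟩ := hs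
  have : 2*s - 1 ≠ 0 := fun h ↦ h12 (by linarith)
  have : 3*s - 2 ≠ 0 := fun h ↦ h23 (by linarith)
  have : 5*s - 4 ≠ 0 := fun h ↦ h45 (by linarith)
  have : s - 1 ≠ 0 := sub_ne_zero.2 h1
  have : s - 2 ≠ 0 := sub_ne_zero.2 h2
  rw [det_M]
  positivity

theorem stmt_1 (s : ℝ) (hs : s ∉ ({0, 1/2, 2/3, 4/5, 1, 2} : Set ℝ)) :
    IsUnit (M s) ∧
      ∀ v : Fin 4 → ℂ, ((M s).map (Complex.ofReal)).mulVec v = 0 → v = 0 := by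
  have hM : IsUnit (M s) := (Matrix.isUnit_iff_isUnit_det _).2 (det_M_ne_zero hs).isUnit
  refine ⟨hM, fun v hv ↦ ?_⟩
  have hMℂ : IsUnit ((M s).map Complex.ofReal) := hM.map Complex.ofRealHom.mapMatrix
  exact Matrix.mulVec_injective_of_isUnit hMℂ (hv.trans (Matrix.mulVec_zero _).symm)

end
end

section
/- Let n ≥ 1, s ≠ 1 a real number, and T : Fin n → Fin n → Fin n → C an array antisymmetric in its lower indices (T^k_{ij} = -T^k_{ji}) satisfying the cyclic quadratic relation ∑_r (T^r_{jk} T^l_{ir} + T^r_{ki} T^l_{jr} + T^r_{ij} T^l_{kr}) = 0 for all i, j, k, l. Define η_j = ∑_k T^k_{kj}, A = ∑ T^k_{pj} T^r_{kl} conj(T^r_{pl}) conj(η_j), and Ã = ∑ T^k_{pl} T^r_{kj} conj(T^r_{pl}) conj(η_j). Then Ã = 2A. -/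
/-!
Writing T i j k for T^k_{ij}, the cyclic identity and antisymmetry give
∑_k T^k_{pl} T^r_{kj} = ∑_k T^k_{lj} T^r_{pk} + ∑_k T^k_{pj} T^r_{kl}.
Contracted against a weight antisymmetric in p, l (here conj T^r_{pl} · conj η_j), the second
term is A, and the first becomes A as well after exchanging p and l.
-/

open Finset

section Contraction

variable {ι R : Type*} [Fintype ι] [CommRing R] {T : ι → ι → ι → R}

theorem sum_comm_outermost_innermost (f : ι → ι → ι → ι → ι → R) :
    ∑ k, ∑ p, ∑ j, ∑ r, ∑ l, f k p j r l = ∑ p, ∑ j, ∑ r, ∑ l, ∑ k, f k p j r l := by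
  rw [sum_comm]; refine sum_congr rfl fun p _ => ?_
  rw [sum_comm]; refine sum_congr rfl fun j _ => ?_
  rw [sum_comm]; refine sum_congr rfl fun r _ => ?_
  rw [sum_comm]

theorem sum_comm_swap_first_last (g : ι → ι → ι → ι → R) :
    ∑ p, ∑ j, ∑ r, ∑ l, g p j r l = ∑ p, ∑ j, ∑ r, ∑ l, g l j r p := by
  have hmove : ∀ h : ι → ι → ι → ι → R,
      ∑ p, ∑ j, ∑ r, ∑ l, h p j r l = ∑ j, ∑ r, ∑ p, ∑ l, h p j r l := fun h => by
    rw [sum_comm]; exact sum_congr rfl fun j _ => sum_comm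
  rw [hmove g, hmove fun p j r l => g l j r p]
  exact sum_congr rfl fun j _ => sum_congr rfl fun r _ => sum_comm

theorem sum_mul_antisymm_right (hT : ∀ i j k, T i j k = -T j i k) (a b c d : ι) :
    ∑ k, T a b k * T k c d = -∑ k, T a b k * T c k d := by
  rw [← sum_neg_distrib]
  exact sum_congr rfl fun k _ => by rw [hT k c, mul_neg]

theorem sum_mul_eq_add_of_cyclic (hT : ∀ i j k, T i j k = -T j i k)
    (hcyc : ∀ i j k l, ∑ r, (T j k r * T i r l + T k i r * T j r l + T i j r * T k r l) = 0)
    (p j r l : ι) :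
    ∑ k, T p l k * T k j r = ∑ k, T l j k * T p k r + ∑ k, T p j k * T k l r := by
  have h := hcyc p l j r
  simp only [sum_add_distrib] at h
  have hjp : ∑ k, T j p k * T l k r = ∑ k, T p j k * T k l r :=
    sum_congr rfl fun k _ => by rw [hT j p, hT l k]; ring
  rw [sum_mul_antisymm_right hT p l j r, ← hjp]
  linear_combination -h

theorem sum_contraction_eq_two_mul (hT : ∀ i j k, T i j k = -T j i k)
    (hcyc : ∀ i j k l, ∑ r, (T j k r * T i r l + T k i r * T j r l + T i j r * T k r l) = 0)
    (c : ι → ι → ι → ι → R) (hc : ∀ p j r l, c l j r p = -c p j r l) :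
    ∑ k, ∑ p, ∑ j, ∑ r, ∑ l, T p l k * T k j r * c p j r l
      = 2 * ∑ k, ∑ p, ∑ j, ∑ r, ∑ l, T p j k * T k l r * c p j r l := by
  have hswap : ∑ p, ∑ j, ∑ r, ∑ l, (∑ k, T l j k * T p k r) * c p j r l
      = ∑ p, ∑ j, ∑ r, ∑ l, (∑ k, T p j k * T k l r) * c p j r l := by
    rw [sum_comm_swap_first_last]
    refine sum_congr rfl fun p _ => sum_congr rfl fun j _ => sum_congr rfl fun r _ =>
      sum_congr rfl fun l _ => ?_
    rw [sum_mul_antisymm_right hT p j l r, hc, mul_neg, neg_mul]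
  calc ∑ k, ∑ p, ∑ j, ∑ r, ∑ l, T p l k * T k j r * c p j r l
      = ∑ p, ∑ j, ∑ r, ∑ l, (∑ k, T p l k * T k j r) * c p j r l := by
        rw [sum_comm_outermost_innermost]; simp only [sum_mul]
    _ = ∑ p, ∑ j, ∑ r, ∑ l, (∑ k, T l j k * T p k r) * c p j r l
          + ∑ p, ∑ j, ∑ r, ∑ l, (∑ k, T p j k * T k l r) * c p j r l := by
        simp only [← sum_add_distrib, ← add_mul, ← sum_mul_eq_add_of_cyclic hT hcyc]
    _ = 2 * ∑ p, ∑ j, ∑ r, ∑ l, (∑ k, T p j k * T k l r) * c p j r l := by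
        rw [hswap, two_mul]
    _ = 2 * ∑ k, ∑ p, ∑ j, ∑ r, ∑ l, T p j k * T k l r * c p j r l := by
        rw [sum_comm_outermost_innermost]; simp only [sum_mul]

end Contraction

theorem stmt_7_general (n : ℕ)
    (T : Fin n → Fin n → Fin n → ℂ)
    (hT : ∀ i j k, T i j k = -T j i k)
    (hcyc : ∀ i j k l, ∑ r, (T j k r * T i r l + T k i r * T j r l + T i j r * T k r l) = 0) :
    let η : Fin n → ℂ := fun j => ∑ k, T k j k
    let A : ℂ := ∑ k, ∑ p, ∑ j, ∑ r, ∑ l,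
      T p j k * T k l r * (starRingEnd ℂ) (T p l r) * (starRingEnd ℂ) (η j)
    let Atilde : ℂ := ∑ k, ∑ p, ∑ j, ∑ r, ∑ l,
      T p l k * T k j r * (starRingEnd ℂ) (T p l r) * (starRingEnd ℂ) (η j)
    Atilde = 2 * A := by
  intro η A Atilde
  have hc : ∀ p j r l, starRingEnd ℂ (T l p r) * starRingEnd ℂ (η j)
      = -(starRingEnd ℂ (T p l r) * starRingEnd ℂ (η j)) := fun p j r l => by
    rw [hT l p, map_neg, neg_mul]
  have key := sum_contraction_eq_two_mul hT hcyc
    (fun p j r l => starRingEnd ℂ (T p l r) * starRingEnd ℂ (η j)) hc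
  simpa only [A, Atilde, mul_assoc] using key

theorem stmt_7 (n : ℕ) (hn : 1 ≤ n) (s : ℝ) (hs : s ≠ 1)
    (T : Fin n → Fin n → Fin n → ℂ)
    (hT : ∀ i j k, T i j k = -T j i k)
    (hcyc : ∀ i j k l, ∑ r, (T j k r * T i r l + T k i r * T j r l + T i j r * T k r l) = 0) :
    let η : Fin n → ℂ := fun j => ∑ k, T k j k
    let A : ℂ := ∑ k, ∑ p, ∑ j, ∑ r, ∑ l,
      T p j k * T k l r * (starRingEnd ℂ) (T p l r) * (starRingEnd ℂ) (η j)
    let Atilde : ℂ := ∑ k, ∑ p, ∑ j, ∑ r, ∑ l,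
      T p l k * T k j r * (starRingEnd ℂ) (T p l r) * (starRingEnd ℂ) (η j)
    Atilde = 2 * A :=
  stmt_7_general n T hT hcyc
end
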